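/- arXiv:2008.11303 — 3 statements merged into one kernel-verified Lean document; each statement's English description precedes it below -/
import Mathlib

section
/- Let x be a feasible solution of a covering integer program, and suppose column j is contained in column i, where i ≠ j. Define x' : I → ℕ by x'(j) = 0, x'(i) = x(i) + x(j), and x'(p) = x(p) for every column p ∉ {i, j}. Then x' is also feasible and has the same cost as x. -/
/-! The merged vector satisfies `x' + x j • eⱼ = x + x j • eᵢ`, so for any weights `w` the weighted
sums differ by `x j * (w i - w j)`. With `w = A · k` this difference is nonnegative, which keeps
every row covered; with `w = c` it vanishes, which keeps the cost. -/

section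

variable {I : Type*} [DecidableEq I]

lemma add_single_eq_add_single_of_merge {x x' : I → ℕ} {i j : I} (hij : i ≠ j)
    (hx'j : x' j = 0) (hx'i : x' i = x i + x j) (hx'p : ∀ p, p ≠ i → p ≠ j → x' p = x p) :
    x' + Pi.single j (x j) = x + Pi.single i (x j) := by
  funext p
  by_cases hpi : p = i
  · subst hpi
    simp [hx'i, hij]
  by_cases hpj : p = j
  · subst hpj
    simp [hx'j, hpi]
  · simp [hx'p p hpi hpj, hpi, hpj]

lemma sum_mul_add_eq_of_add_single_eq [Fintype I] {R : Type*} [CommSemiring R] (w : I → R)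
    {y z : I → ℕ} {i j : I} {a : ℕ} (h : y + Pi.single j a = z + Pi.single i a) :
    ∑ p, w p * y p + w j * a = ∑ p, w p * z p + w i * a := by
  simpa [mul_add, Finset.sum_add_distrib, Pi.single_apply] using
    congrArg (fun f : I → ℕ => ∑ p, w p * (f p : R)) h

end

/-- A covering integer program: columns `I`, rows `K`, matrix `A`, demand `d`, cost `c`.
If column `j` is contained in column `i` (same cost, componentwise smaller coefficients),
then merging the usage of `j` into `i` preserves feasibility and cost. -/
theorem merge_contained_column_feasible_and_cost
    {I K : Type*} [Fintype I] [Fintype K]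
    (A : I → K → ℕ) (d : K → ℕ) (c : I → ℝ)
    (x : I → ℕ) (i j : I) (hij : i ≠ j)
    (hfeas : ∀ k : K, d k ≤ ∑ p : I, A p k * x p)
    (hcost : c i = c j) (hA : ∀ k : K, A j k ≤ A i k)
    (x' : I → ℕ)
    (hx'j : x' j = 0) (hx'i : x' i = x i + x j)
    (hx'p : ∀ p : I, p ≠ i → p ≠ j → x' p = x p) :
    (∀ k : K, d k ≤ ∑ p : I, A p k * x' p) ∧
      (∑ p : I, c p * (x' p : ℝ)) = ∑ p : I, c p * (x p : ℝ) := by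
  classical
  have hmerge := add_single_eq_add_single_of_merge hij hx'j hx'i hx'p
  refine ⟨fun k => ?_, ?_⟩
  · have hrow := sum_mul_add_eq_of_add_single_eq (fun p => A p k) hmerge
    have hcol : A j k * x j ≤ A i k * x j := Nat.mul_le_mul_right _ (hA k)
    simp only [Nat.cast_id] at hrow
    linarith [hfeas k]
  · have hsum := sum_mul_add_eq_of_add_single_eq c hmerge
    rw [hcost] at hsum
    exact add_right_cancel hsum
end

section
/- Let B be a finite set of packing-pattern uses, each b ∈ B having a beam type τ(b) belonging to a finite set C of types, and let L > 0 be the common mold length, with each use b packing beams of total length load(b) satisfying 0 ≤ load(b) ≤ L. Let D : C → ℕ give the number of bars a pattern of each type demands, and let S : C → ℝ with S(c) ≥ 0 satisfy Σ_{b : τ(b) = c} load(b) ≥ S(c) for every type c ∈ C. Then the total number of bars demanded satisfies Σ_{b∈B} D(τ(b)) ≥ ⌈(Σ_{c∈C} D(c)·S(c)) / L⌉. -/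
open Finset

theorem Finset.sum_mul_sum_fiberwise {ι κ R : Type*} [Fintype κ] [DecidableEq κ]
    [NonUnitalNonAssocSemiring R] (s : Finset ι) (g : ι → κ) (w : κ → R) (f : ι → R) :
    ∑ j, w j * ∑ i ∈ s with g i = j, f i = ∑ i ∈ s, w (g i) * f i := by
  rw [← sum_fiberwise s g fun i ↦ w (g i) * f i]
  refine sum_congr rfl fun j _ ↦ ?_
  rw [mul_sum]
  exact sum_congr rfl fun i hi ↦ by rw [(mem_filter.mp hi).2]

theorem bar_count_lower_bound_general
    {B C : Type*} [Fintype B] [Fintype C] [DecidableEq C]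
    (τ : B → C) (L : ℝ) (hL : 0 < L)
    (load : B → ℝ) (hloadL : ∀ b, load b ≤ L)
    (D : C → ℕ) (S : C → ℝ)
    (hcover : ∀ c : C, S c ≤ ∑ b ∈ Finset.univ.filter (fun b : B => τ b = c), load b) :
    ⌈(∑ c : C, (D c : ℝ) * S c) / L⌉ ≤ (∑ b : B, D (τ b) : ℤ) := by
  rw [Int.ceil_le, div_le_iff₀ hL]
  push_cast
  calc ∑ c, (D c : ℝ) * S c
      ≤ ∑ c, (D c : ℝ) * ∑ b ∈ univ with τ b = c, load b :=
        sum_le_sum fun c _ ↦ mul_le_mul_of_nonneg_left (hcover c) (Nat.cast_nonneg _)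
    _ = ∑ b, (D (τ b) : ℝ) * load b := sum_mul_sum_fiberwise _ τ _ load
    _ ≤ ∑ b, (D (τ b) : ℝ) * L :=
        sum_le_sum fun b _ ↦ mul_le_mul_of_nonneg_left (hloadL b) (Nat.cast_nonneg _)
    _ = (∑ b, (D (τ b) : ℝ)) * L := (sum_mul ..).symm

/-- Bar-count lower bound: each packing-pattern use `b` has beam type `τ b`, packs
total beam length `load b ∈ [0, L]` in a mold of length `L > 0`, and demands
`D (τ b)` bars.  If the uses of each type `c` pack at least total length `S c ≥ 0`,
then the total number of bars demanded is at least `⌈(∑ c, D c · S c) / L⌉`. -/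
theorem bar_count_lower_bound
    {B C : Type*} [Fintype B] [Fintype C] [DecidableEq C]
    (τ : B → C) (L : ℝ) (hL : 0 < L)
    (load : B → ℝ) (hload0 : ∀ b, 0 ≤ load b) (hloadL : ∀ b, load b ≤ L)
    (D : C → ℕ) (S : C → ℝ) (hS0 : ∀ c, 0 ≤ S c)
    (hcover : ∀ c : C, S c ≤ ∑ b ∈ Finset.univ.filter (fun b : B => τ b = c), load b) :
    ⌈(∑ c : C, (D c : ℝ) * S c) / L⌉ ≤ (∑ b : B, D (τ b) : ℤ) :=
  bar_count_lower_bound_general τ L hL load hloadL D S hcover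
end

section
/- Let P be a finite set of patterns, a : P → ℕ, f : P → ℝ, γ ≥ 0 a real number with f(p) ≥ γ·a(p) for every p ∈ P, L > 0 a real number, and S ≥ 0 a real number. If y : P → ℕ satisfies L · Σ_{p∈P} a(p)·y(p) ≥ S, then Σ_{p∈P} f(p)·y(p) ≥ γ·⌈S/L⌉. -/
/-!
Each use of a pattern yields `a p` whole bars, so the bar count `∑ a p * y p` is an integer
of length-`L` bars covering `S`, hence at least `⌈S / L⌉`. Since every pattern wastes at least
`γ` per bar it produces, the total waste is at least `γ` times the bar count.
-/

theorem Int.ceil_div_le_of_le_mul {K : Type*} [Field K] [LinearOrder K] [IsStrictOrderedRing K]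
    [FloorRing K] {S L : K} (hL : 0 < L) {n : ℤ} (h : S ≤ L * n) : ⌈S / L⌉ ≤ n :=
  Int.ceil_le.2 ((div_le_iff₀' hL).2 h)

theorem Finset.mul_sum_mul_le_sum_mul {ι R : Type*} [CommSemiring R] [PartialOrder R]
    [IsOrderedRing R] (s : Finset ι) {γ : R} {a f w : ι → R}
    (hfa : ∀ i ∈ s, γ * a i ≤ f i) (hw : ∀ i ∈ s, 0 ≤ w i) :
    γ * ∑ i ∈ s, a i * w i ≤ ∑ i ∈ s, f i * w i := by
  rw [Finset.mul_sum]
  refine Finset.sum_le_sum fun i hi ↦ ?_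
  rw [← mul_assoc]
  exact mul_le_mul_of_nonneg_right (hfa i hi) (hw i hi)

theorem waste_ceiling_lower_bound_general
    {P : Type*} [Fintype P]
    (a : P → ℕ) (f : P → ℝ) (γ : ℝ) (hγ : 0 ≤ γ)
    (hfa : ∀ p : P, γ * (a p : ℝ) ≤ f p)
    (L : ℝ) (hL : 0 < L) (S : ℝ)
    (y : P → ℕ)
    (hcov : S ≤ L * ∑ p : P, (a p : ℝ) * (y p : ℝ)) :
    γ * (⌈S / L⌉ : ℝ) ≤ ∑ p : P, f p * (y p : ℝ) := by
  have hbars : ⌈S / L⌉ ≤ ((∑ p, a p * y p : ℕ) : ℤ) :=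
    Int.ceil_div_le_of_le_mul hL (by push_cast; exact hcov)
  calc γ * (⌈S / L⌉ : ℝ) ≤ γ * ∑ p, (a p : ℝ) * (y p : ℝ) := by
        gcongr
        exact_mod_cast hbars
    _ ≤ ∑ p, f p * (y p : ℝ) :=
        Finset.mul_sum_mul_le_sum_mul _ (fun p _ ↦ hfa p) (fun p _ ↦ Nat.cast_nonneg _)

/-- Combined ceiling and minimum-ratio waste bound: if each pattern `p` produces
`a p` bars of length `L > 0` with waste `f p ≥ γ · a p`, and the total bar length
produced covers `S ≥ 0` (i.e. `L · ∑ p, a p · y p ≥ S`), then the total waste is at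
least `γ · ⌈S / L⌉`. -/
theorem waste_ceiling_lower_bound
    {P : Type*} [Fintype P]
    (a : P → ℕ) (f : P → ℝ) (γ : ℝ) (hγ : 0 ≤ γ)
    (hfa : ∀ p : P, γ * (a p : ℝ) ≤ f p)
    (L : ℝ) (hL : 0 < L) (S : ℝ) (hS : 0 ≤ S)
    (y : P → ℕ)
    (hcov : S ≤ L * ∑ p : P, (a p : ℝ) * (y p : ℝ)) :
    γ * (⌈S / L⌉ : ℝ) ≤ ∑ p : P, f p * (y p : ℝ) :=
  waste_ceiling_lower_bound_general a f γ hγ hfa L hL S y hcov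
end
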